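/- Let n, d, k be positive integers with d·k³ ≤ n, let 0 < p < 1, and fix any d-dependent random graph distribution G(n,p,d). If S is a uniformly random k-element subset of the vertex set {1,…,n}, then the probability that S is uncorrelated is at least 1 − 3dk³/(2n). -/

import Mathlib

/-- A `d`-dependent random graph distribution `G(n, p, d)`: a probability space with
Boolean random variables `X e`, one for each unordered pair `e` of distinct vertices of
`Fin n`, each equal to `true` with probability `p`, such that each `X e` is independent of
the joint family of all variables at pairs outside a set `N e` of at most `d` other pairs. -/
structure DepGraph (n : ℕ) (p : ℝ) (d : ℕ) where
  Ω : Type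
  [mΩ : MeasurableSpace Ω]
  μ : MeasureTheory.Measure Ω
  [probμ : MeasureTheory.IsProbabilityMeasure μ]
  X : Sym2 (Fin n) → Ω → Bool
  meas : ∀ e, Measurable (X e)
  edgeProb : ∀ e : Sym2 (Fin n), ¬ e.IsDiag → μ {ω | X e ω = true} = ENNReal.ofReal p
  locDep : ∀ e : Sym2 (Fin n), ¬ e.IsDiag →
    ∃ N : Finset (Sym2 (Fin n)), e ∉ N ∧ N.card ≤ d ∧
      ProbabilityTheory.IndepFun (X e)
        (fun ω (f : {f : Sym2 (Fin n) // ¬ f.IsDiag ∧ f ∉ N ∧ f ≠ e}) => X f.1 ω) μ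

attribute [instance] DepGraph.mΩ DepGraph.probμ

open MeasureTheory ProbabilityTheory

/-- The random simple graph sampled from a `d`-dependent random graph distribution:
`i` and `j` are adjacent iff `i ≠ j` and `X {i,j} = true`. -/
def DepGraph.graph {n : ℕ} {p : ℝ} {d : ℕ} (G : DepGraph n p d) (ω : G.Ω) :
    SimpleGraph (Fin n) where
  Adj i j := i ≠ j ∧ G.X s(i, j) ω = true
  symm := ⟨by
    intro i j h
    refine ⟨h.1.symm, ?_⟩
    rw [Sym2.eq_swap]
    exact h.2⟩
  loopless := ⟨fun i h => h.1 rfl⟩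

/-- A set `s` of vertices is uncorrelated if the edge variables at any two distinct pairs
of vertices of `s` are independent. -/
def DepGraph.Uncorrelated {n : ℕ} {p : ℝ} {d : ℕ} (G : DepGraph n p d)
    (s : Finset (Fin n)) : Prop :=
  ∀ e e' : Sym2 (Fin n), ¬ e.IsDiag → ¬ e'.IsDiag → e ≠ e' →
    (∀ v ∈ e, v ∈ s) → (∀ v ∈ e', v ∈ s) →
    IndepFun (G.X e) (G.X e') G.μ


/-!
Call an ordered pair `(e, e')` of distinct pairs of vertices dependent if `X e` and `X e'`
are not independent. Local dependence puts `e'` in the neighbourhood `N e`, so there are at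
most `d · C(n,2)` dependent pairs. A bad `k`-set, one that is not uncorrelated, contains the
at least three vertices of some dependent pair, and a fixed set of at least three vertices
lies in at most `C(n,k) · C(k,3) / C(n,3)` of the `k`-sets. Hence the proportion of bad
`k`-sets is at most `d · C(n,2) · C(k,3) / C(n,3) = d k(k-1)(k-2) / (2(n-2)) ≤ 3dk³/(2n)`.
-/

open Finset

theorem Finset.card_filter_powersetCard_subset_mul_choose {α : Type*} [DecidableEq α]
    {s t : Finset α} (hst : s ⊆ t) (n : ℕ) :
    #{u ∈ t.powersetCard n | s ⊆ u} * (#t).choose #s = (#t).choose n * n.choose #s := by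
  rcases le_or_gt #s n with hsn | hns
  · rw [card_filter_powersetCard_subset s t n hst hsn, Nat.choose_mul hsn, mul_comm]
  · have hempty : {u ∈ t.powersetCard n | s ⊆ u} = ∅ :=
      filter_eq_empty_iff.2 fun u hu hsu =>
        (card_le_card hsu).not_gt ((mem_powersetCard.1 hu).2 ▸ hns)
    rw [hempty, Nat.choose_eq_zero_of_lt hns, card_empty, zero_mul, mul_zero]

theorem Finset.card_filter_powersetCard_superset_le {α K : Type*} [DecidableEq α] [Field K]
    [LinearOrder K] [IsStrictOrderedRing K] {s t : Finset α} (hst : s ⊆ t) {m : ℕ}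
    (hm : m ≤ #s) (n : ℕ) :
    (#{u ∈ t.powersetCard n | s ⊆ u} : K) ≤ (#t).choose n * n.choose m / (#t).choose m := by
  obtain ⟨r, hrs, rfl⟩ := exists_subset_card_eq hm
  have hpos : 0 < (#t).choose #r := Nat.choose_pos ((card_le_card hrs).trans (card_le_card hst))
  rw [le_div_iff₀ (by positivity)]
  have hmono : #{u ∈ t.powersetCard n | s ⊆ u} ≤ #{u ∈ t.powersetCard n | r ⊆ u} :=
    card_le_card (monotone_filter_right _ fun _ _ hsu => hrs.trans hsu)
  exact_mod_cast (Nat.mul_le_mul_right _ hmono).trans_eq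
    (card_filter_powersetCard_subset_mul_choose (hrs.trans hst) n)

theorem Sym2.three_le_card_toFinset_union {α : Type*} [DecidableEq α] {e e' : Sym2 α}
    (he : ¬e.IsDiag) (he' : ¬e'.IsDiag) (hne : e ≠ e') :
    3 ≤ #(e.toFinset ∪ e'.toFinset) := by
  by_contra! hlt
  have hleft : e.toFinset = e.toFinset ∪ e'.toFinset :=
    eq_of_subset_of_card_le subset_union_left (by rw [card_toFinset_of_not_isDiag e he]; omega)
  have hright : e'.toFinset = e.toFinset ∪ e'.toFinset :=
    eq_of_subset_of_card_le subset_union_right (by rw [card_toFinset_of_not_isDiag e' he']; omega)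
  have hsame : e.toFinset = e'.toFinset := hleft.trans hright.symm
  exact hne (Sym2.ext fun x => by rw [← mem_toFinset, ← mem_toFinset, hsame])

theorem Nat.cast_choose_three {K : Type*} [Field K] [CharZero K] (a : ℕ) :
    (a.choose 3 : K) = a * (a - 1) * (a - 2) / 6 := by
  rw [Nat.cast_choose_eq_descPochhammer_div]
  simp [descPochhammer_succ_right, Nat.factorial]

-- For `n < 3` the left-hand side is `0` through division by `C(n,3) = 0`.
theorem Nat.choose_two_mul_choose_three_div_le (n k : ℕ) :
    (n.choose 2 : ℝ) * (k.choose 3 / n.choose 3) ≤ 3 * k ^ 3 / (2 * n) := by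
  rcases lt_or_ge n 3 with hn | hn
  · rw [Nat.choose_eq_zero_of_lt hn]
    simp only [Nat.cast_zero, div_zero, mul_zero]
    positivity
  have hn' : (3 : ℝ) ≤ n := by exact_mod_cast hn
  have hk : (0 : ℝ) ≤ k * (3 * k - 2) := by
    rcases Nat.eq_zero_or_pos k with rfl | hk
    · simp
    · have : (1 : ℝ) ≤ k := by exact_mod_cast hk
      nlinarith
  have hlhs : (n.choose 2 : ℝ) * (k.choose 3 / n.choose 3)
      = k * (k - 1) * (k - 2) / (2 * (n - 2)) := by
    have h1 : (n : ℝ) - 1 ≠ 0 := by linarith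
    have h2 : (n : ℝ) - 2 ≠ 0 := by linarith
    rw [Nat.cast_choose_two, Nat.cast_choose_three, Nat.cast_choose_three]
    field_simp
  rw [hlhs, div_le_div_iff₀ (by linarith) (by linarith)]
  nlinarith [mul_nonneg hk (Nat.cast_nonneg (α := ℝ) n),
    mul_nonneg (pow_nonneg (Nat.cast_nonneg (α := ℝ) k) 3) (sub_nonneg.2 hn')]

namespace DepGraph

open MeasureTheory ProbabilityTheory

variable {n : ℕ} {p : ℝ} {d : ℕ} (G : DepGraph n p d)

open Classical in
noncomputable def dependentPairs : Finset (Sym2 (Fin n) × Sym2 (Fin n)) :=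
  {q | ¬q.1.IsDiag ∧ ¬q.2.IsDiag ∧ q.1 ≠ q.2 ∧ ¬IndepFun (G.X q.1) (G.X q.2) G.μ}

theorem mem_dependentPairs {q : Sym2 (Fin n) × Sym2 (Fin n)} :
    q ∈ G.dependentPairs ↔
      ¬q.1.IsDiag ∧ ¬q.2.IsDiag ∧ q.1 ≠ q.2 ∧ ¬IndepFun (G.X q.1) (G.X q.2) G.μ := by
  simp [dependentPairs]

theorem exists_card_le_forall_indepFun {e : Sym2 (Fin n)} (he : ¬e.IsDiag) :
    ∃ N : Finset (Sym2 (Fin n)), #N ≤ d ∧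
      ∀ e', ¬e'.IsDiag → e' ∉ N → e' ≠ e → IndepFun (G.X e) (G.X e') G.μ := by
  obtain ⟨N, -, hNcard, hindep⟩ := G.locDep e he
  refine ⟨N, hNcard, fun e' he' heN hne => ?_⟩
  let f : {f : Sym2 (Fin n) // ¬f.IsDiag ∧ f ∉ N ∧ f ≠ e} := ⟨e', he', heN, hne⟩
  exact hindep.comp measurable_id (measurable_pi_apply f)

theorem card_dependentPairs_le : #G.dependentPairs ≤ d * n.choose 2 := by
  have hedges : #({e : Sym2 (Fin n) | ¬e.IsDiag} : Finset _) = n.choose 2 := by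
    rw [← Fintype.card_subtype, Sym2.card_subtype_not_diag, Fintype.card_fin]
  rw [← hedges]
  refine card_le_mul_card_image_of_maps_to (f := Prod.fst)
    (fun q hq => by simpa using (G.mem_dependentPairs.1 hq).1) d fun e he => ?_
  obtain ⟨N, hNcard, hindep⟩ := G.exists_card_le_forall_indepFun (by simpa using he)
  refine (card_le_card_of_injOn Prod.snd (t := N) (fun q hq => ?_) ?_).trans hNcard
  · obtain ⟨hqD, rfl⟩ := mem_filter.1 (mem_coe.1 hq)
    obtain ⟨-, hq₂, hne, hdep⟩ := G.mem_dependentPairs.1 hqD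
    by_contra hqN
    exact hdep (hindep q.2 hq₂ hqN hne.symm)
  · intro q hq q' hq' hsnd
    exact Prod.ext ((mem_filter.1 hq).2.trans (mem_filter.1 hq').2.symm) hsnd

theorem exists_dependentPairs_subset_of_not_uncorrelated {s : Finset (Fin n)}
    (hs : ¬G.Uncorrelated s) :
    ∃ q ∈ G.dependentPairs, q.1.toFinset ∪ q.2.toFinset ⊆ s := by
  simp only [Uncorrelated, not_forall] at hs
  obtain ⟨e, e', he, he', hne, hes, he's, hdep⟩ := hs
  refine ⟨(e, e'), G.mem_dependentPairs.2 ⟨he, he', hne, hdep⟩, union_subset ?_ ?_⟩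
  · exact fun v hv => hes v (Sym2.mem_toFinset.1 hv)
  · exact fun v hv => he's v (Sym2.mem_toFinset.1 hv)

open Classical in
theorem card_not_uncorrelated_le_card_dependentPairs_mul (k : ℕ) :
    (#{s ∈ (univ : Finset (Fin n)).powersetCard k | ¬G.Uncorrelated s} : ℝ) ≤
      #G.dependentPairs * (n.choose k * k.choose 3 / n.choose 3) := by
  have hcover : {s ∈ (univ : Finset (Fin n)).powersetCard k | ¬G.Uncorrelated s} ⊆
      G.dependentPairs.biUnion fun q =>
        {s ∈ (univ : Finset (Fin n)).powersetCard k | q.1.toFinset ∪ q.2.toFinset ⊆ s} := by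
    intro s hs
    obtain ⟨hsk, hs⟩ := mem_filter.1 hs
    obtain ⟨q, hq, hqs⟩ := G.exists_dependentPairs_subset_of_not_uncorrelated hs
    exact mem_biUnion.2 ⟨q, hq, mem_filter.2 ⟨hsk, hqs⟩⟩
  calc (#{s ∈ (univ : Finset (Fin n)).powersetCard k | ¬G.Uncorrelated s} : ℝ)
      ≤ ∑ q ∈ G.dependentPairs,
          (#{s ∈ (univ : Finset (Fin n)).powersetCard k |
            q.1.toFinset ∪ q.2.toFinset ⊆ s} : ℝ) := by
        exact_mod_cast (card_le_card hcover).trans card_biUnion_le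
    _ ≤ ∑ _q ∈ G.dependentPairs, (n.choose k * k.choose 3 / n.choose 3 : ℝ) := by
        refine sum_le_sum fun q hq => ?_
        obtain ⟨he, he', hne, -⟩ := G.mem_dependentPairs.1 hq
        simpa using card_filter_powersetCard_superset_le (subset_univ _)
          (Sym2.three_le_card_toFinset_union he he' hne) k
    _ = _ := by rw [sum_const, nsmul_eq_mul]

open Classical in
theorem card_not_uncorrelated_le (k : ℕ) :
    (#{s ∈ (univ : Finset (Fin n)).powersetCard k | ¬G.Uncorrelated s} : ℝ) ≤
      3 * d * k ^ 3 / (2 * n) * n.choose k :=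
  calc _ ≤ (#G.dependentPairs : ℝ) * (n.choose k * k.choose 3 / n.choose 3) :=
        G.card_not_uncorrelated_le_card_dependentPairs_mul k
    _ ≤ ((d * n.choose 2 : ℕ) : ℝ) * (n.choose k * k.choose 3 / n.choose 3) := by
        gcongr
        exact G.card_dependentPairs_le
    _ = d * ((n.choose 2 : ℝ) * (k.choose 3 / n.choose 3)) * n.choose k := by
        push_cast
        ring
    _ ≤ d * (3 * k ^ 3 / (2 * n)) * n.choose k := by
        gcongr
        exact Nat.choose_two_mul_choose_three_div_le n k
    _ = 3 * d * k ^ 3 / (2 * n) * n.choose k := by ring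

open Classical in
theorem ncard_uncorrelated_eq (k : ℕ) :
    (({s : Finset (Fin n) | s.card = k ∧ G.Uncorrelated s}).ncard : ℝ) =
      n.choose k - #{s ∈ (univ : Finset (Fin n)).powersetCard k | ¬G.Uncorrelated s} := by
  have hsplit := card_filter_add_card_filter_not (s := (univ : Finset (Fin n)).powersetCard k)
    G.Uncorrelated
  rw [card_powersetCard, card_univ, Fintype.card_fin] at hsplit
  have hset : {s : Finset (Fin n) | s.card = k ∧ G.Uncorrelated s} =
      ↑({s ∈ (univ : Finset (Fin n)).powersetCard k | G.Uncorrelated s}) := by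
    ext s
    simp
  rw [hset, Set.ncard_coe_finset, eq_sub_iff_add_eq]
  exact_mod_cast hsplit

end DepGraph

/-- **Lemma (most `k`-sets are uncorrelated).** Let `n, d, k` be positive integers with
`d·k³ ≤ n`, let `0 < p < 1`, and fix any `d`-dependent random graph distribution
`G(n,p,d)`.  If `S` is a uniformly random `k`-element subset of the vertex set, then the
probability that `S` is uncorrelated is at least `1 - 3dk³/(2n)`; equivalently (as stated
here), the number of uncorrelated `k`-element vertex sets is at least
`(1 - 3dk³/(2n))·C(n,k)`. -/
theorem uncorrelated_sets_lower_bound :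
    ∀ n d k : ℕ, 0 < n → 0 < d → 0 < k → d * k ^ 3 ≤ n →
      ∀ p : ℝ, 0 < p → p < 1 →
      ∀ G : DepGraph n p d,
        (1 - 3 * (d : ℝ) * (k : ℝ) ^ 3 / (2 * (n : ℝ))) * (n.choose k : ℝ) ≤
          (({s : Finset (Fin n) | s.card = k ∧ G.Uncorrelated s}).ncard : ℝ) := by
  intro n d k _ _ _ _ p _ _ G
  rw [G.ncard_uncorrelated_eq k]
  linarith [G.card_not_uncorrelated_le k]
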